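/- Let n ≥ 1 and let K be a real n×n matrix. In the exterior algebra Λ(ℝ^{2n+2}) with standard basis e_1,…,e_{2n+2}, write ψ_i = ι(e_i), ψ̄_i = ι(e_{n+i}) for 1 ≤ i ≤ n, α = ι(e_{2n+1}), β = ι(e_{2n+2}), and set S = Σ_{i,j} K_{ij} ψ̄_i ∧ ψ_j − Σ_i α ∧ ψ_i − Σ_i ψ̄_i ∧ β. Then S^{n+1} = −(n+1)! · |adj(K)| · Ω ∧ α ∧ β, where |adj(K)| denotes the sum of all entries of the adjugate matrix of K, and Ω = ψ̄_1 ∧ ψ_1 ∧ ⋯ ∧ ψ̄_n ∧ ψ_n. (When K is invertible this says the top-degree part of the Grassmann Gaussian exp(S) equals det(K)·e^{−|K⁻¹| α∧β}, since det(K)·|K⁻¹| = |adj(K)|.) -/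

import Mathlib

/-!
Put `ξ = (ψ̄₁, …, ψ̄ₙ, -α)` and `η = (ψ₁, …, ψₙ, β)`. Then `S = ∑ B i j • ξ i η j` for the
bordered matrix `B = [[K, -𝟙], [𝟙ᵀ, 0]]`. The degree-two elements `z i j = ξ i η j` commute
with each other, multiply to zero when they share a row or a column index, and change sign when
two column indices are exchanged. In the commutative algebra they generate, every row sum
`∑ⱼ B i j z i j` therefore squares to zero, so the `(n+1)`-st power of `S` is `(n+1)!` times the
product of the row sums, and the Leibniz formula turns that product into `det B · ∏ z i i`.
Expanding `det B` along its last row and column gives `∑ adj(K)`, and `∏ z i i = -Ω α β`.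
-/

open Finset Equiv Matrix Fin
open scoped Nat

section SquareZero
variable {R : Type*} [CommRing R]

theorem add_pow_succ_of_mul_self_eq_zero {x : R} (hx : x * x = 0) (y : R) (k : ℕ) :
    (x + y) ^ (k + 1) = y ^ (k + 1) + (k + 1) * (x * y ^ k) := by
  induction k with
  | zero => simp [add_comm]
  | succ k ih =>
    rw [pow_succ', ih]
    push_cast
    linear_combination ((k : R) + 1) * y ^ k * hx

variable {ι : Type*} [DecidableEq ι] {w : ι → R}

theorem sum_pow_card_succ_eq_zero (s : Finset ι) (hw : ∀ i ∈ s, w i * w i = 0) :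
    (∑ i ∈ s, w i) ^ (#s + 1) = 0 := by
  induction s using Finset.induction_on with
  | empty => simp
  | @insert a s ha ih =>
    rw [sum_insert ha, card_insert_of_notMem ha,
      add_pow_succ_of_mul_self_eq_zero (hw a (mem_insert_self a s)), pow_succ,
      ih fun i hi => hw i (mem_insert_of_mem hi)]
    simp

theorem sum_pow_card_eq_factorial_mul_prod (s : Finset ι) (hw : ∀ i ∈ s, w i * w i = 0) :
    (∑ i ∈ s, w i) ^ #s = (#s)! * ∏ i ∈ s, w i := by
  induction s using Finset.induction_on with
  | empty => simp
  | @insert a s ha ih =>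
    have hs : ∀ i ∈ s, w i * w i = 0 := fun i hi => hw i (mem_insert_of_mem hi)
    rw [sum_insert ha, card_insert_of_notMem ha, prod_insert ha,
      add_pow_succ_of_mul_self_eq_zero (hw a (mem_insert_self a s)),
      sum_pow_card_succ_eq_zero s hs, ih hs, Nat.factorial_succ]
    push_cast
    ring

end SquareZero

section Alternating
variable {R : Type*} [CommRing R] {ι : Type*} [Fintype ι] [DecidableEq ι] {z : ι → ι → R}

theorem prod_univ_eq_mul_mul_prod_erase_erase (f : ι → R) {x y : ι} (hxy : x ≠ y) :
    ∏ i, f i = f x * f y * ∏ i ∈ (univ.erase x).erase y, f i := by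
  rw [← mul_prod_erase _ f (mem_univ x),
    ← mul_prod_erase _ f (mem_erase.2 ⟨hxy.symm, mem_univ y⟩), mul_assoc]

theorem prod_apply_perm_eq_sign_smul_prod (hswap : ∀ i j k l, z i j * z k l = -(z i l * z k j))
    (σ : Perm ι) :
    ∏ i, z i (σ i) = Perm.sign σ • ∏ i, z i i := by
  induction σ using Perm.swap_induction_on' with
  | one => simp
  | mul_swap f x y hxy ih =>
    have hrest : ∀ i ∈ (univ.erase x).erase y, z i ((f * swap x y) i) = z i (f i) := by
      intro i hi
      simp only [mem_erase] at hi
      simp [swap_apply_of_ne_of_ne hi.2.1 hi.1]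
    rw [prod_univ_eq_mul_mul_prod_erase_erase _ hxy, prod_congr rfl hrest, Perm.sign_mul,
      Perm.sign_swap hxy, mul_neg_one, Units.neg_smul, ← ih,
      prod_univ_eq_mul_mul_prod_erase_erase (fun i => z i (f i)) hxy]
    simp only [Perm.coe_mul, Function.comp_apply, swap_apply_left, swap_apply_right]
    rw [hswap, neg_mul]

theorem prod_apply_eq_zero_of_not_injective (hcol : ∀ i j k, z i j * z k j = 0) {g : ι → ι}
    (hg : ¬ Function.Injective g) : ∏ i, z i (g i) = 0 := by
  obtain ⟨x, y, hgxy, hxy⟩ := Function.not_injective_iff.1 hg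
  rw [prod_univ_eq_mul_mul_prod_erase_erase _ hxy, hgxy, hcol, zero_mul]

theorem prod_sum_mul_eq_det_mul_prod (hswap : ∀ i j k l, z i j * z k l = -(z i l * z k j))
    (hcol : ∀ i j k, z i j * z k j = 0) (M : Matrix ι ι R) :
    ∏ i, ∑ j, M i j * z i j = M.det * ∏ i, z i i := calc
  ∏ i, ∑ j, M i j * z i j = ∑ g : ι → ι, (∏ i, M i (g i)) * ∏ i, z i (g i) := by
    simp only [prod_univ_sum, Fintype.piFinset_univ, prod_mul_distrib]
  _ = ∑ g : ι → ι with Function.Bijective g, (∏ i, M i (g i)) * ∏ i, z i (g i) := by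
    refine (sum_subset (filter_subset _ _) fun g _ hg => ?_).symm
    rw [prod_apply_eq_zero_of_not_injective hcol, mul_zero]
    rwa [mem_filter, and_iff_right (mem_univ g), ← Finite.injective_iff_bijective] at hg
  _ = ∑ σ : Perm ι, (∏ i, M i (σ i)) * ∏ i, z i (σ i) :=
    sum_bij (fun g h ↦ Equiv.ofBijective g (mem_filter.1 h).2) (fun _ _ ↦ mem_univ _)
      (fun _ _ _ _ h ↦ by injection h)
      (fun σ _ ↦ ⟨σ, mem_filter.2 ⟨mem_univ _, σ.bijective⟩, coe_fn_injective rfl⟩) fun _ _ ↦ rfl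
  _ = M.det * ∏ i, z i i := by
    rw [← M.det_transpose, Matrix.det_apply, sum_mul]
    simp only [prod_apply_perm_eq_sign_smul_prod hswap, mul_smul_comm, smul_mul_assoc,
      transpose_apply]

variable (z) in
theorem sum_pow_card_eq_factorial_mul_det_mul_prod
    (hswap : ∀ i j k l, z i j * z k l = -(z i l * z k j)) (hrow : ∀ i j l, z i j * z i l = 0)
    (hcol : ∀ i j k, z i j * z k j = 0) (M : Matrix ι ι R) :
    (∑ i, ∑ j, M i j * z i j) ^ Fintype.card ι = (Fintype.card ι)! * (M.det * ∏ i, z i i) := by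
  have hsq : ∀ i ∈ univ, (∑ j, M i j * z i j) * (∑ j, M i j * z i j) = 0 := fun i _ => by
    simp only [sum_mul_sum, mul_mul_mul_comm _ (z i _), hrow, mul_zero, sum_const_zero]
  rw [← prod_sum_mul_eq_det_mul_prod hswap hcol, ← card_univ,
    sum_pow_card_eq_factorial_mul_prod _ hsq]

end Alternating

namespace Matrix
variable {R : Type*} {k : ℕ}

def bordered (K : Matrix (Fin k) (Fin k) R) (u v : Fin k → R) (d : R) :
    Matrix (Fin (k + 1)) (Fin (k + 1)) R :=
  of (snoc (fun a => snoc (K a) (u a)) (snoc v d))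

@[simp] theorem bordered_castSucc_castSucc (K : Matrix (Fin k) (Fin k) R) (u v : Fin k → R)
    (d : R) (a b : Fin k) : bordered K u v d a.castSucc b.castSucc = K a b := by
  simp [bordered]

@[simp] theorem bordered_castSucc_last (K : Matrix (Fin k) (Fin k) R) (u v : Fin k → R) (d : R)
    (a : Fin k) : bordered K u v d a.castSucc (last k) = u a := by
  simp [bordered]

@[simp] theorem bordered_last_castSucc (K : Matrix (Fin k) (Fin k) R) (u v : Fin k → R) (d : R)
    (b : Fin k) : bordered K u v d (last k) b.castSucc = v b := by
  simp [bordered]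

@[simp] theorem bordered_last_last (K : Matrix (Fin k) (Fin k) R) (u v : Fin k → R) (d : R) :
    bordered K u v d (last k) (last k) = d := by
  simp [bordered]

theorem det_bordered_zero [CommRing R] (K : Matrix (Fin k) (Fin k) R) (u v : Fin k → R) :
    (bordered K u v 0).det = -(v ⬝ᵥ K.adjugate *ᵥ u) := by
  cases k with
  | zero => simpa [det_unique] using bordered_last_last K u v 0
  | succ k =>
    have hminor : ∀ b : Fin (k + 1),
        ((K.bordered u v 0).submatrix castSucc b.castSucc.succAbove).det =
        ∑ a : Fin (k + 1),
          (-1) ^ ((a : ℕ) + k) * u a * (K.submatrix a.succAbove b.succAbove).det := by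
      intro b
      rw [det_succ_column _ (last k)]
      have hlast : b.castSucc.succAbove (last k) = last (k + 1) := by
        rw [succAbove_of_le_castSucc _ _ (castSucc_le_castSucc_iff.2 (le_last b)), succ_last]
      have hK : ∀ a : Fin (k + 1), ((K.bordered u v 0).submatrix castSucc
          b.castSucc.succAbove).submatrix a.succAbove castSucc =
          K.submatrix a.succAbove b.succAbove := by
        intro a
        ext i j
        simp [castSucc_succAbove_castSucc]
      simp only [submatrix_apply, succAbove_last, hlast, hK, val_last, bordered_castSucc_last]
    rw [det_succ_row _ (last _), sum_univ_castSucc]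
    simp only [succAbove_last, hminor, bordered_last_castSucc, bordered_last_last, val_last,
      val_castSucc, mul_zero, zero_mul, add_zero, dotProduct, mulVec,
      adjugate_fin_succ_eq_det_submatrix, mul_sum, ← sum_neg_distrib]
    refine sum_congr rfl fun b _ => sum_congr rfl fun a _ => ?_
    have hsign :
        (-1 : R) ^ (k + 1 + (b : ℕ)) * (-1) ^ ((a : ℕ) + k) = -(-1) ^ ((a : ℕ) + b) := by
      rw [← pow_add, show k + 1 + (b : ℕ) + (a + k) = a + b + 2 * k + 1 by ring, pow_succ,
        pow_add, pow_mul]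
      simp
    linear_combination v b * u a * (K.submatrix a.succAbove b.succAbove).det * hsign

end Matrix

namespace ExteriorAlgebra
variable {R M : Type*} [CommRing R] [AddCommGroup M] [Module R M]

theorem ι_mul_ι_anticomm (x y : M) : ι R x * ι R y = -(ι R y * ι R x) :=
  eq_neg_of_add_eq_zero_left (ι_add_mul_swap x y)

theorem commute_ι_ι_mul_ι (x y z : M) : Commute (ι R x) (ι R y * ι R z) := by
  rw [Commute, SemiconjBy, ← mul_assoc, ι_mul_ι_anticomm x y, neg_mul, mul_assoc,
    ι_mul_ι_anticomm x z, mul_neg, neg_neg, mul_assoc]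

theorem commute_ι_mul_ι (a b c d : M) : Commute (ι R a * ι R b) (ι R c * ι R d) :=
  (commute_ι_ι_mul_ι a c d).mul_left (commute_ι_ι_mul_ι b c d)

theorem ι_mul_ι_mul_ι_mul_ι_swap (a b c d : M) :
    ι R a * ι R b * (ι R c * ι R d) = -(ι R a * ι R d * (ι R c * ι R b)) := by
  have h : ι R d * (ι R c * ι R b) = -(ι R b * (ι R c * ι R d)) := by
    rw [(commute_ι_ι_mul_ι d c b).eq, mul_assoc, ι_mul_ι_anticomm b d, mul_neg, ← mul_assoc,
      ← (commute_ι_ι_mul_ι b c d).eq]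
  rw [mul_assoc, mul_assoc (ι R a), h, mul_neg, neg_neg]

theorem ι_mul_ι_mul_ι_mul_ι_eq_zero_left (a b c : M) : ι R a * ι R b * (ι R a * ι R c) = 0 := by
  rw [← mul_assoc, ← (commute_ι_ι_mul_ι a a b).eq, ← mul_assoc, ι_sq_zero, zero_mul, zero_mul]

theorem ι_mul_ι_mul_ι_mul_ι_eq_zero_right (a b c : M) : ι R a * ι R c * (ι R b * ι R c) = 0 := by
  rw [mul_assoc, (commute_ι_ι_mul_ι c b c).eq, mul_assoc, ι_sq_zero, mul_zero, mul_zero]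

open scoped IsMulCommutative in
theorem pow_sum_smul_ι_mul_ι {m : ℕ} (ξ η : Fin m → M) (A : Matrix (Fin m) (Fin m) R) :
    (∑ i, ∑ j, A i j • (ι R (ξ i) * ι R (η j))) ^ m =
      (m ! * A.det) • (List.ofFn fun i => ι R (ξ i) * ι R (η i)).prod := by
  let z (p : Fin m × Fin m) : ExteriorAlgebra R M := ι R (ξ p.1) * ι R (η p.2)
  let B := Algebra.adjoin R (Set.range z)
  have : IsMulCommutative B := Algebra.isMulCommutative_adjoin R <| by
    rintro _ ⟨p, rfl⟩ _ ⟨q, rfl⟩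
    exact (commute_ι_mul_ι _ _ _ _).eq
  let z' (i j : Fin m) : B := ⟨z (i, j), Algebra.subset_adjoin ⟨(i, j), rfl⟩⟩
  have hcore := sum_pow_card_eq_factorial_mul_det_mul_prod z'
    (fun _ _ _ _ => Subtype.ext (ι_mul_ι_mul_ι_mul_ι_swap _ _ _ _))
    (fun _ _ _ => Subtype.ext (ι_mul_ι_mul_ι_mul_ι_eq_zero_left _ _ _))
    (fun _ _ _ => Subtype.ext (ι_mul_ι_mul_ι_mul_ι_eq_zero_right _ _ _)) (A.map (algebraMap R B))
  rw [Fintype.card_fin, ← List.prod_ofFn, ← RingHom.mapMatrix_apply, ← RingHom.map_det] at hcore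
  have := congrArg B.val hcore
  simp only [map_pow, map_sum, map_mul, map_natCast, AlgHom.commutes, map_list_prod,
    RingHom.mapMatrix_apply, Matrix.map_apply, List.map_ofFn, Function.comp_def] at this
  simp only [Algebra.smul_def, map_mul, map_natCast, mul_assoc]
  exact this

end ExteriorAlgebra

open ExteriorAlgebra

theorem grassmann_gaussian_with_sources (n : ℕ)
    (K : Matrix (Fin n) (Fin n) ℝ) :
    let ψ : Fin n → ExteriorAlgebra ℝ (Fin (2 * n + 2) → ℝ) :=
      fun i => ι ℝ (Pi.single (⟨i.val, by have := i.2; omega⟩ : Fin (2 * n + 2)) (1 : ℝ))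
    let ψbar : Fin n → ExteriorAlgebra ℝ (Fin (2 * n + 2) → ℝ) :=
      fun i => ι ℝ (Pi.single (⟨n + i.val, by have := i.2; omega⟩ : Fin (2 * n + 2)) (1 : ℝ))
    let α : ExteriorAlgebra ℝ (Fin (2 * n + 2) → ℝ) :=
      ι ℝ (Pi.single (⟨2 * n, by omega⟩ : Fin (2 * n + 2)) (1 : ℝ))
    let β : ExteriorAlgebra ℝ (Fin (2 * n + 2) → ℝ) :=
      ι ℝ (Pi.single (⟨2 * n + 1, by omega⟩ : Fin (2 * n + 2)) (1 : ℝ))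
    let S : ExteriorAlgebra ℝ (Fin (2 * n + 2) → ℝ) :=
      (∑ i : Fin n, ∑ j : Fin n, K i j • (ψbar i * ψ j))
        - (∑ i : Fin n, α * ψ i) - ∑ i : Fin n, ψbar i * β
    let Ω : ExteriorAlgebra ℝ (Fin (2 * n + 2) → ℝ) :=
      ((List.finRange n).map fun i => ψbar i * ψ i).prod
    S ^ (n + 1)
      = -((((n + 1).factorial : ℝ) * ∑ a, ∑ b, K.adjugate a b) • (Ω * α * β)) := by
  intro ψ ψbar α β S Ω
  let ξ : Fin (n + 1) → Fin (2 * n + 2) → ℝ :=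
    snoc (fun a => Pi.single ⟨n + a, by omega⟩ 1) (-Pi.single ⟨2 * n, by omega⟩ 1)
  let η : Fin (n + 1) → Fin (2 * n + 2) → ℝ :=
    snoc (fun b => Pi.single ⟨b, by omega⟩ 1) (Pi.single ⟨2 * n + 1, by omega⟩ 1)
  have hS : S = ∑ i, ∑ j, K.bordered (-1) 1 0 i j • (ι ℝ (ξ i) * ι ℝ (η j)) := by
    simp only [S, ψ, ψbar, α, β]
    simp only [sum_univ_castSucc, snoc_castSucc, snoc_last, sum_add_distrib,
      bordered_castSucc_castSucc, bordered_last_castSucc, bordered_castSucc_last,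
      bordered_last_last, Pi.one_apply, Pi.neg_apply, map_neg, neg_mul, smul_neg, one_smul,
      neg_smul, zero_smul, neg_zero, add_zero, sum_neg_distrib, ξ, η]
    abel
  have hΩ : Ω * α * β = -(List.ofFn fun i => ι ℝ (ξ i) * ι ℝ (η i)).prod := by
    rw [List.ofFn_succ', List.prod_concat]
    simp [ξ, η, Ω, ψ, ψbar, α, β, List.ofFn_eq_map, mul_assoc]
  rw [hS, pow_sum_smul_ι_mul_ι, det_bordered_zero, hΩ, smul_neg]
  simp [dotProduct, mulVec]
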